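/- If u is a unit vector, λ ∈ ℂ with Re(λ) ≤ γ, and there exists w ∈ Dom(A) with ‖u − w‖ + ‖Aw − λw‖ < ε, then ‖T_t u − e^{λt} u‖ ≤ ε (1 + M + Mt) e^{γt} for all t ≥ 0. -/

import Mathlib

/-!
Pick `w ∈ D` as in the hypothesis and split
`T t u - e^{λt} u = T t (u - w) + (T t w - e^{λt} w) + e^{λt} (w - u)`.
The outer terms are at most `(M + 1) e^{γt} ‖u - w‖`. For the middle one, the derivative of
`r ↦ e^{λ(t-r)} T r w` is `e^{λ(t-r)} T r (A w - λ w)`, of norm at most `M e^{γt} ‖A w - λ w‖`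
on `[0, t]`, so the mean value inequality bounds it by `M t e^{γt} ‖A w - λ w‖`.
-/

open Set

theorem norm_cexp_mul_ofReal_le {lam : ℂ} {γ s : ℝ} (hre : lam.re ≤ γ) (hs : 0 ≤ s) :
    ‖Complex.exp (lam * s)‖ ≤ Real.exp (γ * s) := by
  rw [Complex.norm_exp, Complex.re_mul_ofReal]
  exact Real.exp_le_exp.2 (mul_le_mul_of_nonneg_right hre hs)

theorem HasDerivAt.cexp_mul_sub_smul {E : Type*} [NormedAddCommGroup E] [NormedSpace ℂ E]
    {f : ℝ → E} {f' : E} {r : ℝ} (hf : HasDerivAt f f' r) (lam : ℂ) (t : ℝ) :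
    HasDerivAt (fun r : ℝ => Complex.exp (lam * (t - r)) • f r)
      (Complex.exp (lam * (t - r)) • (f' - lam • f r)) r := by
  have hexp : HasDerivAt (fun r : ℝ => Complex.exp (lam * (t - r)))
      (Complex.exp (lam * (t - r)) * (lam * (0 - 1))) r :=
    (((hasDerivAt_const r (t : ℂ)).sub (hasDerivAt_id r).ofReal_comp).const_mul lam).cexp
  refine (hexp.smul hf).congr_deriv ?_
  module

section GrowthBound

variable {E : Type*} [NormedAddCommGroup E] [NormedSpace ℂ E] {T : ℝ → E →L[ℂ] E} {M γ : ℝ}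

theorem norm_orbit_sub_cexp_smul_le (hT0 : T 0 = 1)
    (hTnorm : ∀ r : ℝ, 0 ≤ r → ‖T r‖ ≤ M * Real.exp (γ * r)) {lam : ℂ} (hre : lam.re ≤ γ)
    {t : ℝ} (ht : 0 ≤ t) {v w : E}
    (hderiv : ∀ r ∈ Icc 0 t, HasDerivAt (fun r => T r w) (T r v) r) :
    ‖T t w - Complex.exp (lam * t) • w‖ ≤ M * Real.exp (γ * t) * ‖v - lam • w‖ * t := by
  set g : ℝ → E := fun r => Complex.exp (lam * (t - r)) • T r w
  have hg : ∀ r ∈ Icc 0 t,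
      HasDerivAt g (Complex.exp (lam * (t - r)) • T r (v - lam • w)) r := by
    intro r hr
    simpa only [map_sub, map_smul] using (hderiv r hr).cexp_mul_sub_smul lam t
  have hbound : ∀ r ∈ Ico 0 t,
      ‖Complex.exp (lam * (t - r)) • T r (v - lam • w)‖ ≤ M * Real.exp (γ * t) * ‖v - lam • w‖ := by
    intro r ⟨hr0, hrt⟩
    have hexp := norm_cexp_mul_ofReal_le (s := t - r) hre (by linarith)
    push_cast at hexp
    calc ‖Complex.exp (lam * (t - r)) • T r (v - lam • w)‖
        ≤ Real.exp (γ * (t - r)) * (M * Real.exp (γ * r) * ‖v - lam • w‖) := by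
          rw [norm_smul]
          exact mul_le_mul hexp ((T r).le_of_opNorm_le (hTnorm r hr0) _) (norm_nonneg _)
            (Real.exp_nonneg _)
      _ = M * Real.exp (γ * t) * ‖v - lam • w‖ := by
          rw [show γ * t = γ * (t - r) + γ * r by ring, Real.exp_add]
          ring
  have hmvt := norm_image_sub_le_of_norm_deriv_le_segment'
    (fun r hr => (hg r hr).hasDerivWithinAt) hbound t (right_mem_Icc.2 ht)
  simpa [g, hT0] using hmvt

theorem norm_apply_sub_cexp_smul_le (hT0 : T 0 = 1)
    (hTnorm : ∀ r : ℝ, 0 ≤ r → ‖T r‖ ≤ M * Real.exp (γ * r)) {lam : ℂ} (hre : lam.re ≤ γ)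
    {t : ℝ} (ht : 0 ≤ t) {u v w : E}
    (hderiv : ∀ r ∈ Icc 0 t, HasDerivAt (fun r => T r w) (T r v) r) :
    ‖T t u - Complex.exp (lam * t) • u‖ ≤
      ((1 + M) * ‖u - w‖ + M * t * ‖v - lam • w‖) * Real.exp (γ * t) := by
  have hsplit : T t u - Complex.exp (lam * t) • u =
      T t (u - w) + (T t w - Complex.exp (lam * t) • w) + Complex.exp (lam * t) • (w - u) := by
    simp only [map_sub, smul_sub]
    abel
  have hfirst : ‖T t (u - w)‖ ≤ M * Real.exp (γ * t) * ‖u - w‖ :=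
    (T t).le_of_opNorm_le (hTnorm t ht) _
  have hlast : ‖Complex.exp (lam * t) • (w - u)‖ ≤ Real.exp (γ * t) * ‖u - w‖ := by
    rw [norm_smul, norm_sub_rev]
    exact mul_le_mul_of_nonneg_right (norm_cexp_mul_ofReal_le hre ht) (norm_nonneg _)
  have hmiddle := norm_orbit_sub_cexp_smul_le hT0 hTnorm hre ht hderiv
  calc ‖T t u - Complex.exp (lam * t) • u‖
      ≤ ‖T t (u - w)‖ + ‖T t w - Complex.exp (lam * t) • w‖
          + ‖Complex.exp (lam * t) • (w - u)‖ := hsplit ▸ norm_add₃_le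
    _ ≤ M * Real.exp (γ * t) * ‖u - w‖ + M * Real.exp (γ * t) * ‖v - lam • w‖ * t
          + Real.exp (γ * t) * ‖u - w‖ := by gcongr
    _ = ((1 + M) * ‖u - w‖ + M * t * ‖v - lam • w‖) * Real.exp (γ * t) := by ring

end GrowthBound

theorem semigroup_approximate_unit_eigenvector_bound_general
    {H : Type*} [NormedAddCommGroup H] [InnerProductSpace ℂ H]
    (T : ℝ → H →L[ℂ] H)
    (hT0 : T 0 = 1)
    (M γ : ℝ) (hM : 1 ≤ M)
    (hTnorm : ∀ t : ℝ, 0 ≤ t → ‖T t‖ ≤ M * Real.exp (γ * t))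
    (D : Set H) (A : H → H)
    (hgen : ∀ w ∈ D, ∀ t : ℝ, 0 ≤ t → HasDerivAt (fun r => T r w) (T t (A w)) t)
    (ε : ℝ)
    (u : H) (lam : ℂ) (hre : lam.re ≤ γ)
    (happrox : ∃ w ∈ D, ‖u - w‖ + ‖A w - lam • w‖ < ε) :
    ∀ t : ℝ, 0 ≤ t →
      ‖T t u - Complex.exp (lam * t) • u‖ ≤ ε * (1 + M + M * t) * Real.exp (γ * t) := by
  obtain ⟨w, hwD, hw⟩ := happrox
  intro t ht
  have hbound := norm_apply_sub_cexp_smul_le hT0 hTnorm hre ht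
    (fun r hr => hgen w hwD r hr.1) (u := u)
  refine hbound.trans (mul_le_mul_of_nonneg_right ?_ (Real.exp_nonneg _))
  have huw : ‖u - w‖ ≤ ε := by linarith [norm_nonneg (A w - lam • w)]
  have hAw : ‖A w - lam • w‖ ≤ ε := by linarith [norm_nonneg (u - w)]
  have hMt : 0 ≤ M * t := mul_nonneg (by linarith) ht
  linarith [mul_le_mul_of_nonneg_left huw (by linarith : (0 : ℝ) ≤ 1 + M),
    mul_le_mul_of_nonneg_left hAw hMt]

/-- If `u` is a unit vector, `λ ∈ ℂ` with `Re(λ) ≤ γ`, and there is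
`w ∈ Dom(A)` with `‖u − w‖ + ‖Aw − λw‖ < ε`, then
`‖T_t u − e^{λt} u‖ ≤ ε (1 + M + Mt) e^{γt}` for all `t ≥ 0`. -/
theorem semigroup_approximate_unit_eigenvector_bound
    {H : Type*} [NormedAddCommGroup H] [InnerProductSpace ℂ H] [CompleteSpace H]
    (T : ℝ → H →L[ℂ] H)
    (hT0 : T 0 = 1)
    (hTadd : ∀ s t : ℝ, 0 ≤ s → 0 ≤ t → T (s + t) = (T s).comp (T t))
    (M γ : ℝ) (hM : 1 ≤ M)
    (hTnorm : ∀ t : ℝ, 0 ≤ t → ‖T t‖ ≤ M * Real.exp (γ * t))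
    (D : Set H) (A : H → H)
    (hgen : ∀ w ∈ D, ∀ t : ℝ, 0 ≤ t → HasDerivAt (fun r => T r w) (T t (A w)) t)
    (ε : ℝ) (hε0 : 0 < ε)
    (u : H) (hu : ‖u‖ = 1) (lam : ℂ) (hre : lam.re ≤ γ)
    (happrox : ∃ w ∈ D, ‖u - w‖ + ‖A w - lam • w‖ < ε) :
    ∀ t : ℝ, 0 ≤ t →
      ‖T t u - Complex.exp (lam * t) • u‖ ≤ ε * (1 + M + M * t) * Real.exp (γ * t) :=
  semigroup_approximate_unit_eigenvector_bound_general T hT0 M γ hM hTnorm D A hgen ε u lam hre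
    happrox
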